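/- If the spectral radius of |W⁻¹ΔW| is strictly less than 1, then the perturbed PGCS equation has a unique solution (ΔX_1, ΔY_1, …, ΔX_p, ΔY_p), the matrix I − |W⁻¹ΔW| is invertible, and the solution satisfies the entrywise inequality |Δz| ≤ (I − |W⁻¹ΔW|)⁻¹ |W⁻¹(Δg − ΔW z)|. -/

import Mathlib

open Matrix
open scoped Kronecker

noncomputable section

/-- column-stacking `vec` of a matrix, indexed by (column, row). -/
def vecM {a b : ℕ} (M : Matrix (Fin a) (Fin b) ℝ) : Fin b × Fin a → ℝ :=
  fun ji => M ji.2 ji.1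

/-- Euclidean norm of a finitely-indexed real vector. -/
def l2norm {ι : Type*} [Fintype ι] (v : ι → ℝ) : ℝ :=
  Real.sqrt (∑ i, v i ^ 2)

/-- Frobenius norm of a real matrix. -/
def frob {ι κ : Type*} [Fintype ι] [Fintype κ] (M : Matrix ι κ ℝ) : ℝ :=
  Real.sqrt (∑ i, ∑ j, M i j ^ 2)

/-- Spectral norm of a real matrix: supremum of `‖M v‖₂` over the closed unit ball. -/
def specNorm {ι κ : Type*} [Fintype ι] [Fintype κ] (M : Matrix ι κ ℝ) : ℝ :=
  sSup ((fun v => l2norm (M.mulVec v)) '' {v | l2norm v ≤ 1})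

/-- sup-norm (`‖·‖∞`) of a finitely-indexed real vector. -/
def linf {ι : Type*} [Fintype ι] (v : ι → ℝ) : ℝ := ⨆ i, |v i|

/-- max-row-sum (∞-operator) norm of a real matrix. -/
def rowSumNorm {ι κ : Type*} [Fintype ι] [Fintype κ] (M : Matrix ι κ ℝ) : ℝ :=
  ⨆ i, ∑ j, |M i j|

/-- max-norm (`‖·‖_max`) of a real matrix. -/
def maxNorm {ι κ : Type*} [Fintype ι] [Fintype κ] (M : Matrix ι κ ℝ) : ℝ :=
  ⨆ i, ⨆ j, |M i j|

/-- entrywise absolute value of a matrix. -/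
def matAbs {ι κ : Type*} (M : Matrix ι κ ℝ) : Matrix ι κ ℝ := M.map (fun x => |x|)

/-- spectral radius (maximum modulus of the complex eigenvalues) of a real square matrix. -/
def specRad {ι : Type*} [Fintype ι] [DecidableEq ι] (M : Matrix ι ι ℝ) : ENNReal :=
  spectralRadius ℂ (M.map (fun x => (x : ℂ)))

/-- index type for the stacked vector `z = (vec X₁; vec Y₁; …; vec X_p; vec Y_p)`:
component `(k, 0, ·)` holds `vec X_k` and `(k, 1, ·)` holds `vec Y_k`. -/
abbrev BIdx (m n p : ℕ) := Fin p × Fin 2 × Fin n × Fin m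

/-- index type for the vec'd data `(vec A_k; vec B_k; vec E_k; vec C_k; vec D_k; vec F_k)`
of one period. -/
abbrev CIdx (m n : ℕ) :=
  (Fin m × Fin m) ⊕ (Fin n × Fin n) ⊕ (Fin n × Fin m) ⊕
  (Fin m × Fin m) ⊕ (Fin n × Fin n) ⊕ (Fin n × Fin m)

variable {m n p : ℕ}

/-- the stacked vector `(vec X₁; vec Y₁; …; vec X_p; vec Y_p)`. -/
def bigVec (X Y : Fin p → Matrix (Fin m) (Fin n) ℝ) : BIdx m n p → ℝ :=
  fun x => if x.2.1 = 0 then vecM (X x.1) x.2.2 else vecM (Y x.1) x.2.2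

/-- the coefficient matrix `W` of the PGCS equation: block row `(k,0)` has `Iₙ ⊗ A_k` in
block column `(k,0)` and `−(B_kᵀ ⊗ Iₘ)` in block column `(k,1)`; block row `(k,1)` has
`Iₙ ⊗ C_k` in block column `(k+1 mod p, 0)` and `−(D_kᵀ ⊗ Iₘ)` in block column `(k,1)`. -/
def Wmat [NeZero p] (A C : Fin p → Matrix (Fin m) (Fin m) ℝ)
    (B D : Fin p → Matrix (Fin n) (Fin n) ℝ) :
    Matrix (BIdx m n p) (BIdx m n p) ℝ :=
  Matrix.of fun x y =>
    if x.2.1 = 0 then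
      (if y.1 = x.1 ∧ y.2.1 = 0 then
        ((1 : Matrix (Fin n) (Fin n) ℝ) ⊗ₖ A x.1) x.2.2 y.2.2 else 0) +
      (if y.1 = x.1 ∧ y.2.1 = 1 then
        (-((B x.1)ᵀ ⊗ₖ (1 : Matrix (Fin m) (Fin m) ℝ))) x.2.2 y.2.2 else 0)
    else
      (if y.1 = x.1 + 1 ∧ y.2.1 = 0 then
        ((1 : Matrix (Fin n) (Fin n) ℝ) ⊗ₖ C x.1) x.2.2 y.2.2 else 0) +
      (if y.1 = x.1 ∧ y.2.1 = 1 then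
        (-((D x.1)ᵀ ⊗ₖ (1 : Matrix (Fin m) (Fin m) ℝ))) x.2.2 y.2.2 else 0)

/-- the block-diagonal matrix `Ĥ = diag(Ĥ⁽¹⁾,…,Ĥ⁽ᵖ⁾)` (also `H₁`, `H₂`) with block
`Ĥ⁽ᵏ⁾ = [α_k (X_kᵀ ⊗ Iₘ), −β_k (Iₙ ⊗ Y_k), −γ_k I, 0, 0, 0;
        0, 0, 0, ζ_k (X_{k+1}ᵀ ⊗ Iₘ), −τ_k (Iₙ ⊗ Y_k), −δ_k I]`. -/
def Hmat [NeZero p] (Xh Yh : Fin p → Matrix (Fin m) (Fin n) ℝ)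
    (al be ga ze ta de : Fin p → ℝ) :
    Matrix (BIdx m n p) (Fin p × CIdx m n) ℝ :=
  Matrix.of fun x y =>
    if y.1 = x.1 then
      if x.2.1 = 0 then
        (match y.2 with
        | Sum.inl a => al x.1 * (((Xh x.1)ᵀ ⊗ₖ (1 : Matrix (Fin m) (Fin m) ℝ)) x.2.2 a)
        | Sum.inr (Sum.inl b) =>
            -(be x.1 * (((1 : Matrix (Fin n) (Fin n) ℝ) ⊗ₖ Yh x.1) x.2.2 b))
        | Sum.inr (Sum.inr (Sum.inl e)) =>
            -(ga x.1 * ((1 : Matrix (Fin n × Fin m) (Fin n × Fin m) ℝ) x.2.2 e))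
        | _ => 0)
      else
        (match y.2 with
        | Sum.inr (Sum.inr (Sum.inr (Sum.inl c))) =>
            ze x.1 * (((Xh (x.1 + 1))ᵀ ⊗ₖ (1 : Matrix (Fin m) (Fin m) ℝ)) x.2.2 c)
        | Sum.inr (Sum.inr (Sum.inr (Sum.inr (Sum.inl d)))) =>
            -(ta x.1 * (((1 : Matrix (Fin n) (Fin n) ℝ) ⊗ₖ Yh x.1) x.2.2 d))
        | Sum.inr (Sum.inr (Sum.inr (Sum.inr (Sum.inr f)))) =>
            -(de x.1 * ((1 : Matrix (Fin n × Fin m) (Fin n × Fin m) ℝ) x.2.2 f))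
        | _ => 0)
    else 0

/-- the parameter vector `t = (vec A₁; vec B₁; vec E₁; vec C₁; vec D₁; vec F₁; …)`. -/
def tvec (A C : Fin p → Matrix (Fin m) (Fin m) ℝ)
    (B D : Fin p → Matrix (Fin n) (Fin n) ℝ)
    (E F : Fin p → Matrix (Fin m) (Fin n) ℝ) : Fin p × CIdx m n → ℝ :=
  fun y =>
    match y.2 with
    | Sum.inl a => vecM (A y.1) a
    | Sum.inr (Sum.inl b) => vecM (B y.1) b
    | Sum.inr (Sum.inr (Sum.inl e)) => vecM (E y.1) e
    | Sum.inr (Sum.inr (Sum.inr (Sum.inl c))) => vecM (C y.1) c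
    | Sum.inr (Sum.inr (Sum.inr (Sum.inr (Sum.inl d)))) => vecM (D y.1) d
    | Sum.inr (Sum.inr (Sum.inr (Sum.inr (Sum.inr f)))) => vecM (F y.1) f

/-- the matrix `A_k` encoded in a parameter vector `t`. -/
def pA (t : Fin p × CIdx m n → ℝ) (k : Fin p) : Matrix (Fin m) (Fin m) ℝ :=
  Matrix.of fun i j => t (k, Sum.inl (j, i))

/-- the matrix `B_k` encoded in a parameter vector `t`. -/
def pB (t : Fin p × CIdx m n → ℝ) (k : Fin p) : Matrix (Fin n) (Fin n) ℝ :=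
  Matrix.of fun i j => t (k, Sum.inr (Sum.inl (j, i)))

/-- the matrix `E_k` encoded in a parameter vector `t`. -/
def pE (t : Fin p × CIdx m n → ℝ) (k : Fin p) : Matrix (Fin m) (Fin n) ℝ :=
  Matrix.of fun i j => t (k, Sum.inr (Sum.inr (Sum.inl (j, i))))

/-- the matrix `C_k` encoded in a parameter vector `t`. -/
def pC (t : Fin p × CIdx m n → ℝ) (k : Fin p) : Matrix (Fin m) (Fin m) ℝ :=
  Matrix.of fun i j => t (k, Sum.inr (Sum.inr (Sum.inr (Sum.inl (j, i)))))

/-- the matrix `D_k` encoded in a parameter vector `t`. -/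
def pD (t : Fin p × CIdx m n → ℝ) (k : Fin p) : Matrix (Fin n) (Fin n) ℝ :=
  Matrix.of fun i j => t (k, Sum.inr (Sum.inr (Sum.inr (Sum.inr (Sum.inl (j, i))))))

/-- the matrix `F_k` encoded in a parameter vector `t`. -/
def pF (t : Fin p × CIdx m n → ℝ) (k : Fin p) : Matrix (Fin m) (Fin n) ℝ :=
  Matrix.of fun i j => t (k, Sum.inr (Sum.inr (Sum.inr (Sum.inr (Sum.inr (j, i))))))

/-- the matrix `W(t)` built from the parameter vector `t`. -/
def Wt [NeZero p] (t : Fin p × CIdx m n → ℝ) : Matrix (BIdx m n p) (BIdx m n p) ℝ :=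
  Wmat (pA t) (pC t) (pB t) (pD t)

/-- the right-hand side `g(t) = (vec E₁; vec F₁; …; vec E_p; vec F_p)`. -/
def gt (t : Fin p × CIdx m n → ℝ) : BIdx m n p → ℝ := bigVec (pE t) (pF t)

/-- the set of parameters for which `W(t)` is invertible. -/
def Dset (m n p : ℕ) [NeZero p] : Set (Fin p × CIdx m n → ℝ) := {t | IsUnit (Wt t)}

/-- the solution map `Ψ(t) = W(t)⁻¹ g(t)`. -/
def Psi [NeZero p] (t : Fin p × CIdx m n → ℝ) : BIdx m n p → ℝ := (Wt t)⁻¹.mulVec (gt t)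

/-- the solution matrix `X_k` read off from `Ψ(t)`. -/
def Xsol [NeZero p] (t : Fin p × CIdx m n → ℝ) (k : Fin p) : Matrix (Fin m) (Fin n) ℝ :=
  Matrix.of fun i j => Psi t (k, (0 : Fin 2), (j, i))

/-- the solution matrix `Y_k` read off from `Ψ(t)`. -/
def Ysol [NeZero p] (t : Fin p × CIdx m n → ℝ) (k : Fin p) : Matrix (Fin m) (Fin n) ℝ :=
  Matrix.of fun i j => Psi t (k, (1 : Fin 2), (j, i))

/-- the matrix `H₂(t)` (all tolerances equal to one), built from the solution `Ψ(t)`. -/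
def H2t [NeZero p] (t : Fin p × CIdx m n → ℝ) : Matrix (BIdx m n p) (Fin p × CIdx m n) ℝ :=
  Hmat (Xsol t) (Ysol t) 1 1 1 1 1 1

/-- the componentwise relative ball `B⁰(a, ε)`. -/
def B0 {ι : Type*} (a : ι → ℝ) (ε : ℝ) : Set (ι → ℝ) := {x | ∀ i, |x i - a i| ≤ ε * |a i|}

/-- the componentwise distance `d(x, a)`. -/
def cdist {ι : Type*} [Fintype ι] (x a : ι → ℝ) : ℝ :=
  ⨆ i, if a i = 0 then |x i - a i| else |x i - a i| / |a i|

/-!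
Subtracting `W z = g` from the perturbed system `(W + ΔW)(z + Δz) = g + Δg` leaves
`(I + M) Δz = W⁻¹(Δg − ΔW z)` with `M = W⁻¹ΔW`. Since `|M^k| ≤ |M|^k` entrywise, Gelfand's
formula gives `ρ(−M) ≤ ρ(|M|) < 1`, so `I + M` and `I − |M|` are invertible, and
`(I − |M|)⁻¹ = ∑ |M|^k` is entrywise nonnegative. Taking absolute values in
`Δz = W⁻¹(Δg − ΔW z) − M Δz` gives `(I − |M|)|Δz| ≤ |W⁻¹(Δg − ΔW z)|`, and multiplying by
`(I − |M|)⁻¹` preserves the inequality.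
-/

open Filter Topology
open scoped ENNReal NNReal

section SpectralRadius

-- Gelfand's formula holds for any algebra norm; the ∞-operator norm is the one that is
-- monotone under entrywise domination.
attribute [local instance] Matrix.linftyOpNormedRing Matrix.linftyOpNormedAlgebra

variable {ι : Type*} [Fintype ι] [DecidableEq ι]

lemma nnnorm_map_ofReal (M : Matrix ι ι ℝ) :
    ‖M.map ((↑) : ℝ → ℂ)‖₊ = ‖M‖₊ := by
  simp [Matrix.linfty_opNNNorm_def]

lemma tendsto_nnnorm_pow_one_div_specRad (M : Matrix ι ι ℝ) :
    Tendsto (fun k : ℕ => (‖M ^ k‖₊ : ℝ≥0∞) ^ (1 / k : ℝ)) atTop (𝓝 (specRad M)) := by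
  have hpow (k : ℕ) : (M ^ k).map ((↑) : ℝ → ℂ) = M.map ((↑) : ℝ → ℂ) ^ k :=
    map_pow Complex.ofRealHom.mapMatrix M k
  simpa only [← hpow, nnnorm_map_ofReal, specRad] using
    spectrum.pow_nnnorm_pow_one_div_tendsto_nhds_spectralRadius (M.map ((↑) : ℝ → ℂ))

lemma abs_pow_apply_le {M N : Matrix ι ι ℝ} (h : ∀ i j, |M i j| ≤ N i j) (k : ℕ) (i j : ι) :
    |(M ^ k) i j| ≤ (N ^ k) i j := by
  induction k generalizing j with
  | zero => by_cases hij : i = j <;> simp [hij]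
  | succ k ih =>
    simp only [pow_succ, Matrix.mul_apply]
    refine (Finset.abs_sum_le_sum_abs _ _).trans (Finset.sum_le_sum fun l _ => ?_)
    rw [abs_mul]
    exact mul_le_mul (ih l) (h l j) (abs_nonneg _) ((abs_nonneg _).trans (ih l))

lemma nnnorm_le_of_abs_le {M N : Matrix ι ι ℝ} (h : ∀ i j, |M i j| ≤ N i j) : ‖M‖₊ ≤ ‖N‖₊ := by
  simp only [Matrix.linfty_opNNNorm_def]
  refine Finset.sup_mono_fun fun i _ => Finset.sum_le_sum fun j _ => ?_
  rw [← NNReal.coe_le_coe, coe_nnnorm, coe_nnnorm, Real.norm_eq_abs, Real.norm_eq_abs]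
  exact (h i j).trans (le_abs_self _)

lemma specRad_le_of_abs_le {M N : Matrix ι ι ℝ} (h : ∀ i j, |M i j| ≤ N i j) :
    specRad M ≤ specRad N :=
  le_of_tendsto_of_tendsto' (tendsto_nnnorm_pow_one_div_specRad M)
    (tendsto_nnnorm_pow_one_div_specRad N) fun k => ENNReal.rpow_le_rpow
      (ENNReal.coe_le_coe.2 (nnnorm_le_of_abs_le (abs_pow_apply_le h k))) (by positivity)

lemma summable_pow_of_specRad_lt_one {Q : Matrix ι ι ℝ} (h : specRad Q < 1) :
    Summable (Q ^ ·) := by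
  obtain ⟨r, hQr, hr1⟩ := ENNReal.lt_iff_exists_nnreal_btwn.mp h
  refine Summable.of_norm_bounded_eventually_nat
    (summable_geometric_of_lt_one r.coe_nonneg (by exact_mod_cast hr1)) ?_
  filter_upwards [(tendsto_nnnorm_pow_one_div_specRad Q).eventually_lt_const hQr,
    eventually_ne_atTop 0] with k hk hk0
  have := ENNReal.rpow_le_rpow hk.le (Nat.cast_nonneg (α := ℝ) k)
  rw [← ENNReal.rpow_mul, one_div_mul_cancel (Nat.cast_ne_zero.mpr hk0), ENNReal.rpow_one,
    ENNReal.rpow_natCast, ← ENNReal.coe_pow, ENNReal.coe_le_coe] at this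
  exact_mod_cast this

lemma isUnit_one_sub_of_specRad_lt_one {Q : Matrix ι ι ℝ} (h : specRad Q < 1) :
    IsUnit (1 - Q) :=
  ⟨⟨1 - Q, _, (summable_pow_of_specRad_lt_one h).one_sub_mul_tsum_pow,
    (summable_pow_of_specRad_lt_one h).tsum_pow_mul_one_sub⟩, rfl⟩

lemma inv_one_sub_eq_tsum_pow {Q : Matrix ι ι ℝ} (h : specRad Q < 1) :
    (1 - Q)⁻¹ = ∑' k, Q ^ k :=
  Matrix.inv_eq_right_inv (summable_pow_of_specRad_lt_one h).one_sub_mul_tsum_pow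

lemma inv_one_sub_apply_nonneg {N : Matrix ι ι ℝ} (hN : ∀ i j, 0 ≤ N i j)
    (h : specRad N < 1) (i j : ι) : 0 ≤ (1 - N)⁻¹ i j := by
  have hs := summable_pow_of_specRad_lt_one h
  rw [inv_one_sub_eq_tsum_pow h]
  exact (Pi.hasSum.mp (Pi.hasSum.mp hs.hasSum i) j).nonneg fun k =>
    (abs_nonneg _).trans (abs_pow_apply_le (fun i j => (abs_of_nonneg (hN i j)).le) k i j)

end SpectralRadius

section ComponentwiseBound

variable {ι : Type*} [Fintype ι]

lemma abs_mulVec_apply_le (M : Matrix ι ι ℝ) (x : ι → ℝ) (i : ι) :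
    |(M *ᵥ x) i| ≤ (matAbs M *ᵥ fun j => |x j|) i := by
  simp only [Matrix.mulVec, dotProduct, matAbs, Matrix.map_apply, ← abs_mul]
  exact Finset.abs_sum_le_sum_abs _ _

lemma mulVec_mono_of_nonneg {P : Matrix ι ι ℝ} (hP : ∀ i j, 0 ≤ P i j) {u v : ι → ℝ}
    (huv : u ≤ v) : P *ᵥ u ≤ P *ᵥ v := fun i =>
  dotProduct_le_dotProduct_of_nonneg_left huv (hP i)

variable [DecidableEq ι]

lemma abs_le_inv_one_sub_matAbs_mulVec {M : Matrix ι ι ℝ} (h : specRad (matAbs M) < 1)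
    {x r : ι → ℝ} (hx : x + M *ᵥ x = r) :
    (fun i => |x i|) ≤ (1 - matAbs M)⁻¹ *ᵥ fun i => |r i| := by
  have hres : (1 - matAbs M) *ᵥ (fun i => |x i|) ≤ fun i => |r i| := fun i => by
    have hxi : x i = r i - (M *ᵥ x) i := by rw [← hx, Pi.add_apply, add_sub_cancel_right]
    have := abs_sub (r i) ((M *ᵥ x) i)
    rw [← hxi] at this
    simp only [Matrix.sub_mulVec, Matrix.one_mulVec, Pi.sub_apply]
    linarith [abs_mulVec_apply_le M x i]
  calc (fun i => |x i|)
      = (1 - matAbs M)⁻¹ *ᵥ ((1 - matAbs M) *ᵥ fun i => |x i|) := by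
        rw [Matrix.mulVec_mulVec, Matrix.nonsing_inv_mul _
          ((Matrix.isUnit_iff_isUnit_det _).mp (isUnit_one_sub_of_specRad_lt_one h)),
          Matrix.one_mulVec]
    _ ≤ (1 - matAbs M)⁻¹ *ᵥ fun i => |r i| :=
        mulVec_mono_of_nonneg (inv_one_sub_apply_nonneg (fun _ _ => abs_nonneg _) h) hres

lemma isUnit_add_of_specRad_matAbs_inv_mul_lt_one {W ΔW : Matrix ι ι ℝ} (hW : IsUnit W)
    (h : specRad (matAbs (W⁻¹ * ΔW)) < 1) : IsUnit (W + ΔW) := by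
  have hneg : specRad (-(W⁻¹ * ΔW)) < 1 :=
    (specRad_le_of_abs_le fun i j => by simp [matAbs]).trans_lt h
  have hfac : W + ΔW = W * (1 - -(W⁻¹ * ΔW)) := by
    rw [sub_neg_eq_add, mul_add, mul_one, ← mul_assoc, Matrix.mul_nonsing_inv _
      ((Matrix.isUnit_iff_isUnit_det _).mp hW), one_mul]
  exact hfac ▸ hW.mul (isUnit_one_sub_of_specRad_lt_one hneg)

lemma abs_le_of_add_mulVec_eq {W ΔW : Matrix ι ι ℝ} (hW : IsUnit W)
    (h : specRad (matAbs (W⁻¹ * ΔW)) < 1) {x b : ι → ℝ} (hx : (W + ΔW) *ᵥ x = b) :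
    (fun i => |x i|) ≤ (1 - matAbs (W⁻¹ * ΔW))⁻¹ *ᵥ fun i => |(W⁻¹ *ᵥ b) i| := by
  refine abs_le_inv_one_sub_matAbs_mulVec h ?_
  rw [← hx, Matrix.mulVec_mulVec, mul_add, Matrix.nonsing_inv_mul _
    ((Matrix.isUnit_iff_isUnit_det _).mp hW), Matrix.add_mulVec, Matrix.one_mulVec]

end ComponentwiseBound

section Vectorization

@[simp]
lemma bigVec_apply_zero (X Y : Fin p → Matrix (Fin m) (Fin n) ℝ) (k : Fin p) (j : Fin n)
    (i : Fin m) : bigVec X Y (k, 0, j, i) = X k i j := by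
  simp [bigVec, vecM]

@[simp]
lemma bigVec_apply_one (X Y : Fin p → Matrix (Fin m) (Fin n) ℝ) (k : Fin p) (j : Fin n)
    (i : Fin m) : bigVec X Y (k, 1, j, i) = Y k i j := by
  simp [bigVec, vecM]

lemma bigVec_inj {X Y X' Y' : Fin p → Matrix (Fin m) (Fin n) ℝ} :
    bigVec X Y = bigVec X' Y' ↔ X = X' ∧ Y = Y' := by
  refine ⟨fun h => ⟨?_, ?_⟩, fun h => h.1 ▸ h.2 ▸ rfl⟩
  · exact funext fun k => Matrix.ext fun i j => by simpa using congrFun h (k, 0, j, i)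
  · exact funext fun k => Matrix.ext fun i j => by simpa using congrFun h (k, 1, j, i)

lemma bigVec_bijective :
    Function.Bijective fun S : (Fin p → Matrix (Fin m) (Fin n) ℝ) ×
      (Fin p → Matrix (Fin m) (Fin n) ℝ) => bigVec S.1 S.2 := by
  refine ⟨fun S T h => Prod.ext_iff.mpr (bigVec_inj.mp h), fun v => ?_⟩
  refine ⟨(fun k => Matrix.of fun i j => v (k, 0, j, i),
    fun k => Matrix.of fun i j => v (k, 1, j, i)), ?_⟩
  funext ⟨k, s, j, i⟩
  fin_cases s <;> simp

lemma bigVec_add (X Y X' Y' : Fin p → Matrix (Fin m) (Fin n) ℝ) :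
    bigVec (fun k => X k + X' k) (fun k => Y k + Y' k) = bigVec X Y + bigVec X' Y' := by
  funext ⟨k, s, j, i⟩
  fin_cases s <;> simp

variable [NeZero p]

lemma Wmat_add (A C dA dC : Fin p → Matrix (Fin m) (Fin m) ℝ)
    (B D dB dD : Fin p → Matrix (Fin n) (Fin n) ℝ) :
    Wmat (fun k => A k + dA k) (fun k => C k + dC k) (fun k => B k + dB k)
      (fun k => D k + dD k) = Wmat A C B D + Wmat dA dC dB dD := by
  ext x y
  simp only [Wmat, Matrix.of_apply, Matrix.add_apply, Matrix.kroneckerMap_apply,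
    Matrix.transpose_apply, Matrix.neg_apply, Matrix.one_apply]
  split_ifs <;> ring

lemma Wmat_mulVec_bigVec (A C : Fin p → Matrix (Fin m) (Fin m) ℝ)
    (B D : Fin p → Matrix (Fin n) (Fin n) ℝ) (X Y : Fin p → Matrix (Fin m) (Fin n) ℝ) :
    Wmat A C B D *ᵥ bigVec X Y =
      bigVec (fun k => A k * X k - Y k * B k) (fun k => C k * X (k + 1) - Y k * D k) := by
  funext ⟨k, s, j, i⟩
  fin_cases s <;>
  · simp only [Matrix.mulVec, dotProduct, Fintype.sum_prod_type, Fin.sum_univ_two,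
      Wmat, Matrix.of_apply, bigVec, vecM, Matrix.kroneckerMap_apply, Matrix.one_apply,
      Matrix.neg_apply, Matrix.transpose_apply, Matrix.sub_apply, Matrix.mul_apply]
    simp [Finset.sum_ite_eq, Finset.sum_ite_eq', Finset.sum_add_distrib, mul_comm, sub_eq_add_neg]

lemma pgcs_iff_Wmat_mulVec (A C : Fin p → Matrix (Fin m) (Fin m) ℝ)
    (B D : Fin p → Matrix (Fin n) (Fin n) ℝ) (E F X Y : Fin p → Matrix (Fin m) (Fin n) ℝ) :
    (∀ k, A k * X k - Y k * B k = E k ∧ C k * X (k + 1) - Y k * D k = F k) ↔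
      Wmat A C B D *ᵥ bigVec X Y = bigVec E F := by
  rw [Wmat_mulVec_bigVec, bigVec_inj, funext_iff, funext_iff, ← forall_and]

lemma perturbed_pgcs_iff {A C dA dC : Fin p → Matrix (Fin m) (Fin m) ℝ}
    {B D dB dD : Fin p → Matrix (Fin n) (Fin n) ℝ}
    {E F dE dF X Y : Fin p → Matrix (Fin m) (Fin n) ℝ}
    (hsol : ∀ k, A k * X k - Y k * B k = E k ∧ C k * X (k + 1) - Y k * D k = F k)
    (dX dY : Fin p → Matrix (Fin m) (Fin n) ℝ) :
    (∀ k, (A k + dA k) * (X k + dX k) - (Y k + dY k) * (B k + dB k) = E k + dE k ∧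
        (C k + dC k) * (X (k + 1) + dX (k + 1)) - (Y k + dY k) * (D k + dD k) = F k + dF k) ↔
      (Wmat A C B D + Wmat dA dC dB dD) *ᵥ bigVec dX dY =
        bigVec dE dF - Wmat dA dC dB dD *ᵥ bigVec X Y := by
  rw [pgcs_iff_Wmat_mulVec, Wmat_add, bigVec_add, bigVec_add, Matrix.mulVec_add,
    Matrix.add_mulVec, (pgcs_iff_Wmat_mulVec A C B D E F X Y).mp hsol, add_assoc,
    add_right_inj, eq_sub_iff_add_eq, add_comm]

end Vectorization

theorem componentwise_perturbation_bound_general (m n p : ℕ) [NeZero p]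
    (A C dA dC : Fin p → Matrix (Fin m) (Fin m) ℝ)
    (B D dB dD : Fin p → Matrix (Fin n) (Fin n) ℝ)
    (E F dE dF X Y : Fin p → Matrix (Fin m) (Fin n) ℝ)
    (hW : IsUnit (Wmat A C B D))
    (hsol : ∀ k : Fin p, A k * X k - Y k * B k = E k ∧ C k * X (k + 1) - Y k * D k = F k)
    (hrad : specRad (matAbs ((Wmat A C B D)⁻¹ * Wmat dA dC dB dD)) < 1) :
    (∃! S : (Fin p → Matrix (Fin m) (Fin n) ℝ) × (Fin p → Matrix (Fin m) (Fin n) ℝ),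
        ∀ k : Fin p,
          (A k + dA k) * (X k + S.1 k) - (Y k + S.2 k) * (B k + dB k) = E k + dE k ∧
          (C k + dC k) * (X (k + 1) + S.1 (k + 1)) - (Y k + S.2 k) * (D k + dD k) =
            F k + dF k) ∧
      IsUnit (1 - matAbs ((Wmat A C B D)⁻¹ * Wmat dA dC dB dD)) ∧
      ∀ dX dY : Fin p → Matrix (Fin m) (Fin n) ℝ,
        (∀ k : Fin p,
          (A k + dA k) * (X k + dX k) - (Y k + dY k) * (B k + dB k) = E k + dE k ∧
          (C k + dC k) * (X (k + 1) + dX (k + 1)) - (Y k + dY k) * (D k + dD k) =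
            F k + dF k) →
        ∀ i, |bigVec dX dY i| ≤
          ((1 - matAbs ((Wmat A C B D)⁻¹ * Wmat dA dC dB dD))⁻¹.mulVec
            (fun j => |((Wmat A C B D)⁻¹.mulVec
              (bigVec dE dF - (Wmat dA dC dB dD).mulVec (bigVec X Y))) j|)) i := by
  have hperturbed := perturbed_pgcs_iff (dA := dA) (dB := dB) (dC := dC) (dD := dD)
    (dE := dE) (dF := dF) hsol
  refine ⟨?_, isUnit_one_sub_of_specRad_lt_one hrad, fun dX dY h =>
    abs_le_of_add_mulVec_eq hW hrad ((hperturbed dX dY).mp h)⟩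
  have hunit := isUnit_add_of_specRad_matAbs_inv_mul_lt_one hW hrad
  have hbij : Function.Bijective (Wmat A C B D + Wmat dA dC dB dD).mulVec :=
    ⟨Matrix.mulVec_injective_iff_isUnit.mpr hunit, Matrix.mulVec_surjective_iff_isUnit.mpr hunit⟩
  simp only [hperturbed]
  exact bigVec_bijective.existsUnique_iff.mp (hbij.existsUnique _)

/-- if the spectral radius of `|W⁻¹ΔW|` is less than one, the perturbed
PGCS equation has a unique solution, `I − |W⁻¹ΔW|` is invertible, and
`|Δz| ≤ (I − |W⁻¹ΔW|)⁻¹ |W⁻¹(Δg − ΔW z)|` entrywise. -/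
theorem componentwise_perturbation_bound (m n p : ℕ) [NeZero m] [NeZero n] [NeZero p]
    (A C dA dC : Fin p → Matrix (Fin m) (Fin m) ℝ)
    (B D dB dD : Fin p → Matrix (Fin n) (Fin n) ℝ)
    (E F dE dF X Y : Fin p → Matrix (Fin m) (Fin n) ℝ)
    (hW : IsUnit (Wmat A C B D))
    (hsol : ∀ k : Fin p, A k * X k - Y k * B k = E k ∧ C k * X (k + 1) - Y k * D k = F k)
    (hrad : specRad (matAbs ((Wmat A C B D)⁻¹ * Wmat dA dC dB dD)) < 1) :
    (∃! S : (Fin p → Matrix (Fin m) (Fin n) ℝ) × (Fin p → Matrix (Fin m) (Fin n) ℝ),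
        ∀ k : Fin p,
          (A k + dA k) * (X k + S.1 k) - (Y k + S.2 k) * (B k + dB k) = E k + dE k ∧
          (C k + dC k) * (X (k + 1) + S.1 (k + 1)) - (Y k + S.2 k) * (D k + dD k) =
            F k + dF k) ∧
      IsUnit (1 - matAbs ((Wmat A C B D)⁻¹ * Wmat dA dC dB dD)) ∧
      ∀ dX dY : Fin p → Matrix (Fin m) (Fin n) ℝ,
        (∀ k : Fin p,
          (A k + dA k) * (X k + dX k) - (Y k + dY k) * (B k + dB k) = E k + dE k ∧
          (C k + dC k) * (X (k + 1) + dX (k + 1)) - (Y k + dY k) * (D k + dD k) =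
            F k + dF k) →
        ∀ i, |bigVec dX dY i| ≤
          ((1 - matAbs ((Wmat A C B D)⁻¹ * Wmat dA dC dB dD))⁻¹.mulVec
            (fun j => |((Wmat A C B D)⁻¹.mulVec
              (bigVec dE dF - (Wmat dA dC dB dD).mulVec (bigVec X Y))) j|)) i :=
  componentwise_perturbation_bound_general m n p A C dA dC B D dB dD E F dE dF X Y hW hsol hrad
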